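/- Let F be a field and m, m' nonsquare-class representatives in Fˣ. The involutions ι_A and ι_{A'} of SL(2,F), where A = !![0,1;m,0] and A' = !![0,1;m',0], are conjugate by an element of GL(2,F) (i.e. there exists Q ∈ GL(2,F) with ι_{A'} = ι_Q ∘ ι_A ∘ ι_Q⁻¹ on SL(2,F)) if m/m' is a square in Fˣ. -/

import Mathlib

/-! If `m = s² m'`, then `Q = diag(s, 1)` satisfies `Q A Q⁻¹ = s • A'`. Since
`ι_Q ∘ ι_A ∘ ι_Q⁻¹ = ι_{Q A Q⁻¹}` and a nonzero scalar factor does not change a conjugation,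
`ι_Q ∘ ι_A ∘ ι_Q⁻¹ = ι_{A'}`. -/

open Matrix

namespace Matrix

variable {n α : Type*} [Fintype n] [DecidableEq n] [CommRing α]

theorem smul_mul_mul_nonsing_inv_smul {c : α} (hc : IsUnit c) (B g : Matrix n n α) :
    c • B * g * (c • B)⁻¹ = B * g * B⁻¹ := by
  lift c to αˣ using hc
  simp only [← Units.smul_def]
  by_cases hB : IsUnit B.det
  · rw [inv_smul' B c hB, smul_mul, smul_mul, mul_smul_comm, smul_smul, mul_inv_cancel, one_smul]
  · have hcB : ¬IsUnit (c • B).det := by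
      rwa [Units.smul_def, det_smul, IsUnit.mul_iff, not_and_or,
        or_iff_right (not_not_intro (c.isUnit.pow _))]
    rw [nonsing_inv_apply_not_isUnit _ hB, nonsing_inv_apply_not_isUnit _ hcB, mul_zero, mul_zero]

theorem GeneralLinearGroup.coe_mul_conj_mul_coe_inv (Q : GL n α) (B g : Matrix n n α) :
    (Q : Matrix n n α) * (B * ((Q⁻¹ : GL n α) * g * (Q : Matrix n n α)) * B⁻¹) *
        ((Q⁻¹ : GL n α) : Matrix n n α) =
      Q * B * (Q⁻¹ : GL n α) * g * ((Q : Matrix n n α) * B * (Q⁻¹ : GL n α))⁻¹ := by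
  simp [Matrix.mul_inv_rev, coe_units_inv, Matrix.mul_assoc]

end Matrix

theorem diag_mul_antidiag_eq_smul_antidiag_mul_diag {R : Type*} [CommRing R] (s m' : R) :
    !![s, 0; 0, 1] * !![0, 1; s ^ 2 * m', 0] = s • !![0, 1; m', 0] * !![s, 0; 0, 1] := by
  ext i j
  fin_cases i <;> fin_cases j <;> simp [Matrix.mul_apply, Fin.sum_univ_succ]; ring

theorem conjugate_involutions_of_square_class_general (F : Type*) [Field F]
    (m m' : F) (hsq : ∃ s : F, s ≠ 0 ∧ m / m' = s ^ 2) :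
    ∃ Q : GL (Fin 2) F, ∀ g : SpecialLinearGroup (Fin 2) F,
      !![0, 1; m', 0] * (g : Matrix (Fin 2) (Fin 2) F) * (!![0, 1; m', 0])⁻¹ =
        (Q : Matrix (Fin 2) (Fin 2) F) *
          (!![0, 1; m, 0] *
            ((Q⁻¹ : GL (Fin 2) F) * (g : Matrix (Fin 2) (Fin 2) F) *
              (Q : Matrix (Fin 2) (Fin 2) F)) *
            (!![0, 1; m, 0])⁻¹) *
          ((Q⁻¹ : GL (Fin 2) F) : Matrix (Fin 2) (Fin 2) F) := by
  obtain ⟨s, hs, hms⟩ := hsq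
  have hm' : m' ≠ 0 := by
    rintro rfl
    exact pow_ne_zero 2 hs (by rw [← hms, div_zero])
  obtain rfl : m = s ^ 2 * m' := by rw [div_eq_iff hm'] at hms; rw [hms, mul_comm]
  let Q := GeneralLinearGroup.mkOfDetNeZero !![s, 0; 0, 1] (by simpa [det_fin_two])
  have hQ : (Q : Matrix (Fin 2) (Fin 2) F) * !![0, 1; s ^ 2 * m', 0] * (Q⁻¹ : GL (Fin 2) F) =
      s • !![0, 1; m', 0] :=
    (Units.mul_inv_eq_iff_eq_mul Q).mpr <| (diag_mul_antidiag_eq_smul_antidiag_mul_diag s m')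
  refine ⟨Q, fun g => ?_⟩
  rw [GeneralLinearGroup.coe_mul_conj_mul_coe_inv, hQ,
    smul_mul_mul_nonsing_inv_smul (isUnit_iff_ne_zero.mpr hs)]

theorem conjugate_involutions_of_square_class (F : Type*) [Field F] (hF : ringChar F ≠ 2)
    (m m' : F) (hm : m ≠ 0) (hm' : m' ≠ 0) (hsq : ∃ s : F, s ≠ 0 ∧ m / m' = s ^ 2) :
    ∃ Q : GL (Fin 2) F, ∀ g : SpecialLinearGroup (Fin 2) F,
      !![0, 1; m', 0] * (g : Matrix (Fin 2) (Fin 2) F) * (!![0, 1; m', 0])⁻¹ =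
        (Q : Matrix (Fin 2) (Fin 2) F) *
          (!![0, 1; m, 0] *
            ((Q⁻¹ : GL (Fin 2) F) * (g : Matrix (Fin 2) (Fin 2) F) *
              (Q : Matrix (Fin 2) (Fin 2) F)) *
            (!![0, 1; m, 0])⁻¹) *
          ((Q⁻¹ : GL (Fin 2) F) : Matrix (Fin 2) (Fin 2) F) :=
  conjugate_involutions_of_square_class_general F m m' hsq
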